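/- Let G be a DAG and U, V distinct vertices such that every directed path between U and V in G has length at most 1; let H be the graph obtained from G by contracting U and V into a node X_UV, and let G' be the one-step canonical DAG for this contraction. Let T be a vertex of G with T not in {U,V} and T not a parent of U or of V in G. Then: (i) the children of T in G' equal the children of T in H; (ii) the descendants of T in G' with U and V removed equal the descendants of T in H with X_UV removed; and (iii) both U and V are descendants of T in G' if and only if X_UV is a descendant of T in H. -/

import Mathlib

/-!
Merging `v` into `u` sends every edge of the canonical DAG `G'` either to an edge of the
contraction `H` or to a loop at the merged node, so reachability in `G'` descends to `H`;
conversely every edge of `H` is an edge of `G'`. Since `T` is not a parent of `u` or `v`,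
its out-edges in `G'` and in `H` are exactly its out-edges in `G`. Finally `u → v` is an
edge of `G'`, so a descendant `u` of `T` in `G'` brings `v` along.
-/

namespace CausalDAGSummary

variable {α : Type*}

/-- A directed graph (edge relation) is a DAG when it has no directed cycle. -/
def IsDAG (E : α → α → Prop) : Prop := ∀ a, ¬ Relation.TransGen E a a

/-- The edge relation of the graph `H` obtained by contracting the two distinct
vertices `u` and `v` into the single node `X_UV`: the merged node is represented by
`u`, the vertex `v` is removed, the merged node inherits all edges of `u` and of `v`
to/from the remaining vertices, any edge between `u` and `v` is removed, and edges
among the other vertices are kept. -/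
def contractE (E : α → α → Prop) (u v : α) : α → α → Prop := fun a b =>
  a ≠ v ∧ b ≠ v ∧ a ≠ b ∧
    ((a = u ∧ (E u b ∨ E v b)) ∨ (b = u ∧ (E a u ∨ E a v)) ∨
      (a ≠ u ∧ b ≠ u ∧ E a b))

/-- The edge relation of the one-step canonical DAG `G'` for the contraction of `u`
and `v` in `G`: the edges of `G` together with the edge `(u,v)`, edges `(P,u)` for
every parent `P` of `v`, edges `(P,v)` for every parent `P` of `u`, edges `(u,C)` for
every child `C` of `v`, and edges `(v,C)` for every child `C` of `u` (edges join
distinct vertices). -/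
def canonE (E : α → α → Prop) (u v : α) : α → α → Prop := fun a b =>
  a ≠ b ∧
    (E a b ∨ (a = u ∧ b = v) ∨ (b = u ∧ E a v) ∨ (b = v ∧ E a u) ∨
      (a = u ∧ E v b) ∨ (a = v ∧ E u b))

/-- The set `π(t)` of parents of `t`. -/
def parents (E : α → α → Prop) (t : α) : Set α := {w | E w t}

/-- The set `ch(t)` of children of `t`. -/
def children (E : α → α → Prop) (t : α) : Set α := {w | E t w}

/-- The set `Dsc(t)` of descendants of `t` (vertices reachable from `t` by a directed
path, including `t` itself). -/
def desc (E : α → α → Prop) (t : α) : Set α := {w | Relation.ReflTransGen E t w}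

/-- The set `NDsc(t)` of non-descendants of `t`. -/
def ndesc (E : α → α → Prop) (t : α) : Set α := {w | ¬ Relation.ReflTransGen E t w}

def contractMap [DecidableEq α] (u v : α) : α → α := Function.update id v u

@[simp]
lemma contractMap_self [DecidableEq α] (u v : α) : contractMap u v v = u :=
  Function.update_self ..

lemma contractMap_of_ne [DecidableEq α] {u v w : α} (h : w ≠ v) : contractMap u v w = w :=
  Function.update_of_ne h ..

section

variable {E : α → α → Prop} {u v a b T : α}

lemma canonE_edge (huv : u ≠ v) : canonE E u v u v := ⟨huv, Or.inr (Or.inl ⟨rfl, rfl⟩)⟩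

lemma contractE_le_canonE : contractE E u v ≤ canonE E u v := by
  rintro a b ⟨-, -, hab, h⟩
  exact ⟨hab, by rcases h with ⟨rfl, h | h⟩ | ⟨rfl, h | h⟩ | ⟨-, -, h⟩ <;> tauto⟩

lemma canonE.contractMap_eq_or_contractE [DecidableEq α] (huv : u ≠ v) (h : canonE E u v a b) :
    contractMap u v a = contractMap u v b ∨
      contractE E u v (contractMap u v a) (contractMap u v b) := by
  simp only [contractE, contractMap, Function.update_apply, id]
  unfold canonE at h
  grind

lemma reflTransGen_contractE_contractMap [DecidableEq α] (huv : u ≠ v)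
    (h : Relation.ReflTransGen (canonE E u v) a b) :
    Relation.ReflTransGen (contractE E u v) (contractMap u v a) (contractMap u v b) := by
  refine h.lift' _ fun _ _ hab => ?_
  rcases hab.contractMap_eq_or_contractE huv with heq | hE
  · rw [Function.onFun, heq]
  · exact .single hE

lemma canonE_iff_of_not_parent (hTu : T ≠ u) (hTv : T ≠ v) (hpar : ¬ E T u ∧ ¬ E T v) :
    canonE E u v T b ↔ T ≠ b ∧ E T b := by
  unfold canonE
  grind

lemma contractE_iff_of_not_parent (hTu : T ≠ u) (hTv : T ≠ v) (hpar : ¬ E T u ∧ ¬ E T v) :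
    contractE E u v T b ↔ T ≠ b ∧ E T b := by
  unfold contractE
  grind

end

theorem contraction_nonparent_vertex_general {α : Type*}
    (E : α → α → Prop) (u v : α) (huv : u ≠ v)
    (T : α) (hTu : T ≠ u) (hTv : T ≠ v) (hpar : ¬ E T u ∧ ¬ E T v) :
    children (canonE E u v) T = children (contractE E u v) T ∧
      desc (canonE E u v) T \ {u, v}
        = {w | w ≠ v ∧ Relation.ReflTransGen (contractE E u v) T w} \ {u} ∧
      (({u, v} : Set α) ⊆ desc (canonE E u v) T ↔
        Relation.ReflTransGen (contractE E u v) T u) := by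
  classical
  have toContract {w : α} (h : Relation.ReflTransGen (canonE E u v) T w) :
      Relation.ReflTransGen (contractE E u v) T (contractMap u v w) := by
    simpa only [contractMap_of_ne hTv] using reflTransGen_contractE_contractMap huv h
  have toCanon {w : α} (h : Relation.ReflTransGen (contractE E u v) T w) :
      Relation.ReflTransGen (canonE E u v) T w := .mono contractE_le_canonE _ _ h
  refine ⟨?_, ?_, ?_⟩
  · ext b
    simp only [children, Set.mem_ofPred_eq, canonE_iff_of_not_parent hTu hTv hpar,
      contractE_iff_of_not_parent hTu hTv hpar]
  · ext w
    simp only [desc, Set.mem_sdiff, Set.mem_ofPred_eq, Set.mem_insert_iff,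
      Set.mem_singleton_iff, not_or]
    constructor
    · rintro ⟨h, hwu, hwv⟩
      exact ⟨⟨hwv, by simpa only [contractMap_of_ne hwv] using toContract h⟩, hwu⟩
    · rintro ⟨⟨hwv, h⟩, hwu⟩
      exact ⟨toCanon h, hwu, hwv⟩
  · simp only [Set.insert_subset_iff, Set.singleton_subset_iff, desc, Set.mem_ofPred_eq]
    constructor
    · rintro ⟨-, h⟩
      simpa only [contractMap_self] using toContract h
    · intro h
      exact ⟨toCanon h, (toCanon h).tail (canonE_edge huv)⟩

theorem contraction_nonparent_vertex {α : Type*} [Fintype α]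
    (E : α → α → Prop) (hG : IsDAG E) (u v : α) (huv : u ≠ v)
    (hpath : (¬ ∃ w, E u w ∧ Relation.TransGen E w v) ∧
      (¬ ∃ w, E v w ∧ Relation.TransGen E w u))
    (hvu : ¬ E v u)
    (T : α) (hTu : T ≠ u) (hTv : T ≠ v) (hpar : ¬ E T u ∧ ¬ E T v) :
    children (canonE E u v) T = children (contractE E u v) T ∧
      desc (canonE E u v) T \ {u, v}
        = {w | w ≠ v ∧ Relation.ReflTransGen (contractE E u v) T w} \ {u} ∧
      (({u, v} : Set α) ⊆ desc (canonE E u v) T ↔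
        Relation.ReflTransGen (contractE E u v) T u) :=
  contraction_nonparent_vertex_general E u v huv T hTu hTv hpar

end CausalDAGSummary
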